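/- arXiv:1208.0652 — 2 statements merged into one kernel-verified Lean document; each statement's English description precedes it below -/
import Mathlib

section
/- Let V₀ < 0 and let p ∈ ℝ³ satisfy I(p) = V₀ and have bounded forward orbit under the Fibonacci trace map. Then there exists an open neighborhood B_p of p in ℝ³ such that every point q ∈ B_p satisfies I(q) < 0 and also has bounded forward orbit under T. -/
/-!
Since `I(x, y, z) = (z - xy)² - (x² - 1)(y² - 1)` and `I` is symmetric, `I < 0` forces `x² - 1`,
`y² - 1` and `z² - 1` to share a sign. If they are negative, the open set `{I < 0, x² < 1}` is
`T`-invariant and lies in the unit cube. If they are positive, the last coordinates `aₙ` along a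
bounded orbit would stay above some `λ > 1` in absolute value while
`|aₙ₊₃| ≥ 2|aₙ₊₂||aₙ₊₁| - |aₙ|`, which forces `|aₙ|` to decay or to grow geometrically.
-/

open Set Filter

/-- The Fibonacci trace map. -/
noncomputable def traceMap : ℝ × ℝ × ℝ → ℝ × ℝ × ℝ :=
  fun p => (2 * p.1 * p.2.1 - p.2.2, p.1, p.2.1)

/-- The Fricke–Vogt invariant. -/
noncomputable def frickeVogt : ℝ × ℝ × ℝ → ℝ :=
  fun p => p.1 ^ 2 + p.2.1 ^ 2 + p.2.2 ^ 2 - 2 * p.1 * p.2.1 * p.2.2 - 1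

section Growth

variable {v : ℕ → ℝ} {lam : ℝ}

lemma not_bddAbove_range_of_two_mul_mul_sub_le_of_le_mul (hlam : 1 < lam) (hv : ∀ n, lam ≤ v n)
    (hrec : ∀ n, 2 * v (n + 2) * v (n + 1) - v n ≤ v (n + 3)) (h₀ : v 0 ≤ v 1 * v 2) :
    ¬ BddAbove (range v) := by
  have hle : ∀ n, v n ≤ v (n + 1) * v (n + 2) := by
    intro n
    induction n with
    | zero => exact h₀
    | succ n ih =>
      have hmul : v (n + 1) * v (n + 2) ≤ v (n + 3) := by linarith [hrec n]
      have h1 : v (n + 1) ≤ v (n + 1) * v (n + 2) := by nlinarith [hv (n + 1), hv (n + 2)]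
      have h3 : v (n + 3) ≤ v (n + 2) * v (n + 3) := by nlinarith [hv (n + 2), hv (n + 3)]
      linarith
  have hgrow : ∀ k, lam * v (k + 2) ≤ v (k + 2 + 1) := fun k => by
    nlinarith [hrec k, hle k, hv (k + 1), hv (k + 2)]
  have htop : Tendsto (fun k => v (k + 2)) atTop atTop :=
    tendsto_atTop_of_geom_le (by linarith [hv 2]) hlam hgrow
  exact not_bddAbove_of_tendsto_atTop ((tendsto_add_atTop_iff_nat 2).1 htop)

lemma not_bddAbove_range_of_two_mul_mul_sub_le (hlam : 1 < lam) (hv : ∀ n, lam ≤ v n)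
    (hrec : ∀ n, 2 * v (n + 2) * v (n + 1) - v n ≤ v (n + 3)) :
    ¬ BddAbove (range v) := by
  have hpos : ∀ n, 0 < v n := fun n => by linarith [hv n]
  by_cases h : ∃ n₀, v n₀ ≤ v (n₀ + 1) * v (n₀ + 2)
  · obtain ⟨n₀, h₀⟩ := h
    intro hbdd
    refine not_bddAbove_range_of_two_mul_mul_sub_le_of_le_mul (v := fun k => v (n₀ + k))
      hlam (fun _ => hv _) (fun _ => hrec _) h₀ (hbdd.mono ?_)
    rintro _ ⟨k, rfl⟩
    exact ⟨n₀ + k, rfl⟩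
  · push Not at h
    -- `v` then decays geometrically, which is absurd since `v ≥ lam`.
    have hgrow : ∀ n, lam * (v n)⁻¹ ≤ (v (n + 1))⁻¹ := fun n => by
      have hdecay : lam * v (n + 1) ≤ v n := by nlinarith [h n, hv (n + 2), hpos (n + 1)]
      rw [← div_eq_mul_inv, div_le_iff₀ (hpos n), inv_mul_eq_div, le_div_iff₀ (hpos (n + 1))]
      linarith
    have htop : Tendsto (fun n => (v n)⁻¹) atTop atTop :=
      tendsto_atTop_of_geom_le (inv_pos.2 (hpos 0)) hlam hgrow
    refine fun _ => not_bddAbove_of_tendsto_atTop htop ⟨1, ?_⟩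
    rintro _ ⟨n, rfl⟩
    exact inv_le_one_of_one_le₀ (by linarith [hv n])

end Growth

lemma not_bddAbove_abs_of_traceRecurrence {a : ℕ → ℝ} {c : ℝ} (hc : 0 < c)
    (hrec : ∀ n, a (n + 3) = 2 * a (n + 2) * a (n + 1) - a n)
    (hprod : ∀ n, c ≤ (a (n + 1) ^ 2 - 1) * (a n ^ 2 - 1)) (h₀ : 1 < a 0 ^ 2) :
    ¬ BddAbove (range fun n => |a n|) := by
  rintro ⟨M, hM⟩
  have hsq_le : ∀ n, a n ^ 2 ≤ M ^ 2 := fun n => by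
    rw [← sq_abs]
    exact pow_le_pow_left₀ (abs_nonneg _) (hM ⟨n, rfl⟩) 2
  have hout : ∀ n, 1 < a n ^ 2 := by
    intro n
    induction n with
    | zero => exact h₀
    | succ n ih => nlinarith [hprod n]
  have hM1 : 0 < M ^ 2 - 1 := by linarith [hsq_le 0]
  set K := c / (M ^ 2 - 1) with hK
  have hKpos : 0 < K := div_pos hc hM1
  have hlow : ∀ n, 1 + K ≤ a n ^ 2 := fun n => by
    have : K ≤ a n ^ 2 - 1 := by
      rw [hK, div_le_iff₀ hM1]
      nlinarith [hprod n, hsq_le (n + 1), hout n]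
    linarith
  refine not_bddAbove_range_of_two_mul_mul_sub_le (lam := √(1 + K)) ?_ ?_ ?_ ⟨M, hM⟩
  · exact (Real.lt_sqrt zero_le_one).2 (by linarith)
  · exact fun n => (Real.sqrt_le_sqrt (hlow n)).trans_eq (Real.sqrt_sq_eq_abs _)
  · intro n
    simp only [hrec n]
    calc 2 * |a (n + 2)| * |a (n + 1)| - |a n| = |2 * a (n + 2) * a (n + 1)| - |a n| := by
          simp only [abs_mul, abs_two]
      _ ≤ |2 * a (n + 2) * a (n + 1) - a n| := abs_sub_abs_le_abs_sub _ _

lemma continuous_frickeVogt : Continuous frickeVogt := by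
  unfold frickeVogt
  fun_prop

lemma frickeVogt_traceMap (q : ℝ × ℝ × ℝ) : frickeVogt (traceMap q) = frickeVogt q := by
  simp only [traceMap, frickeVogt]
  ring

lemma frickeVogt_iterate_traceMap (q : ℝ × ℝ × ℝ) (n : ℕ) :
    frickeVogt (traceMap^[n] q) = frickeVogt q := by
  induction n with
  | zero => rfl
  | succ n ih => rw [Function.iterate_succ_apply', frickeVogt_traceMap, ih]

lemma neg_frickeVogt_le_xy (x y z : ℝ) : -frickeVogt (x, y, z) ≤ (x ^ 2 - 1) * (y ^ 2 - 1) := by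
  simp only [frickeVogt]
  nlinarith [sq_nonneg (z - x * y)]

lemma neg_frickeVogt_le_yz (x y z : ℝ) : -frickeVogt (x, y, z) ≤ (y ^ 2 - 1) * (z ^ 2 - 1) := by
  simp only [frickeVogt]
  nlinarith [sq_nonneg (x - y * z)]

lemma frickeVogt_neg_trichotomy {q : ℝ × ℝ × ℝ} (h : frickeVogt q < 0) :
    (q.1 ^ 2 < 1 ∧ q.2.1 ^ 2 < 1 ∧ q.2.2 ^ 2 < 1) ∨ (1 < q.1 ^ 2 ∧ 1 < q.2.1 ^ 2 ∧ 1 < q.2.2 ^ 2) := by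
  obtain ⟨x, y, z⟩ := q
  have hxy := neg_frickeVogt_le_xy x y z
  have hyz := neg_frickeVogt_le_yz x y z
  rcases lt_trichotomy (y ^ 2) 1 with hy | hy | hy
  · exact Or.inl ⟨by nlinarith, hy, by nlinarith⟩
  · simp only [hy, sub_self] at hxy
    linarith
  · exact Or.inr ⟨by nlinarith, hy, by nlinarith⟩

def innerRegion : Set (ℝ × ℝ × ℝ) := {q | frickeVogt q < 0 ∧ q.1 ^ 2 < 1}

lemma isOpen_innerRegion : IsOpen innerRegion :=
  (isOpen_lt continuous_frickeVogt continuous_const).inter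
    (isOpen_lt (continuous_fst.pow 2) continuous_const)

lemma sq_lt_one_of_mem_innerRegion {q : ℝ × ℝ × ℝ} (hq : q ∈ innerRegion) :
    q.1 ^ 2 < 1 ∧ q.2.1 ^ 2 < 1 ∧ q.2.2 ^ 2 < 1 :=
  (frickeVogt_neg_trichotomy hq.1).resolve_right fun h => lt_asymm hq.2 h.1

lemma mapsTo_traceMap_innerRegion : MapsTo traceMap innerRegion innerRegion := by
  intro q hq
  have hneg : frickeVogt (traceMap q) < 0 := (frickeVogt_traceMap q).symm ▸ hq.1
  -- the middle coordinate of `traceMap q` is `q.1`, so the trichotomy puts `traceMap q` inside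
  exact ⟨hneg, ((frickeVogt_neg_trichotomy hneg).resolve_right fun h => lt_asymm hq.2 h.2.1).1⟩

lemma norm_le_one_of_mem_innerRegion {q : ℝ × ℝ × ℝ} (hq : q ∈ innerRegion) : ‖q‖ ≤ 1 := by
  obtain ⟨hx, hy, hz⟩ := sq_lt_one_of_mem_innerRegion hq
  simp only [norm_prod_le_iff, Real.norm_eq_abs]
  rw [sq_lt_one_iff_abs_lt_one] at hx hy hz
  exact ⟨hx.le, hy.le, hz.le⟩

lemma isBounded_orbit_of_mem_innerRegion {q : ℝ × ℝ × ℝ} (hq : q ∈ innerRegion) :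
    Bornology.IsBounded (range fun n : ℕ => traceMap^[n] q) := by
  refine (Metric.isBounded_closedBall (x := 0) (r := 1)).subset ?_
  rintro _ ⟨n, rfl⟩
  exact mem_closedBall_zero_iff.2
    (norm_le_one_of_mem_innerRegion (mapsTo_traceMap_innerRegion.iterate n hq))

noncomputable def traceSeq (p : ℝ × ℝ × ℝ) (n : ℕ) : ℝ := (traceMap^[n] p).2.2

lemma traceMap_iterate_eq (p : ℝ × ℝ × ℝ) (n : ℕ) :
    traceMap^[n] p = (traceSeq p (n + 2), traceSeq p (n + 1), traceSeq p n) := by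
  simp only [traceSeq, Function.iterate_succ_apply']
  rfl

lemma traceSeq_add_three (p : ℝ × ℝ × ℝ) (n : ℕ) :
    traceSeq p (n + 3) = 2 * traceSeq p (n + 2) * traceSeq p (n + 1) - traceSeq p n := by
  simp only [traceSeq, Function.iterate_succ_apply']
  rfl

lemma not_isBounded_orbit_of_one_lt_sq {p : ℝ × ℝ × ℝ} (hneg : frickeVogt p < 0)
    (hz : 1 < p.2.2 ^ 2) : ¬ Bornology.IsBounded (range fun n : ℕ => traceMap^[n] p) := by
  intro hB
  obtain ⟨C, hC⟩ := isBounded_iff_forall_norm_le.1 hB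
  refine not_bddAbove_abs_of_traceRecurrence (neg_pos.2 hneg) (traceSeq_add_three p)
    (fun n => ?_) hz ⟨C, ?_⟩
  · have h := neg_frickeVogt_le_yz (traceSeq p (n + 2)) (traceSeq p (n + 1)) (traceSeq p n)
    rwa [← traceMap_iterate_eq, frickeVogt_iterate_traceMap] at h
  · rintro _ ⟨n, rfl⟩
    calc |traceSeq p n| = ‖(traceMap^[n] p).2.2‖ := (Real.norm_eq_abs _).symm
      _ ≤ ‖(traceMap^[n] p).2‖ := norm_snd_le _
      _ ≤ ‖traceMap^[n] p‖ := norm_snd_le _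
      _ ≤ C := hC _ ⟨n, rfl⟩

theorem bounded_orbit_open_for_negative_invariant
    (V₀ : ℝ) (hV₀ : V₀ < 0) (p : ℝ × ℝ × ℝ) (hI : frickeVogt p = V₀)
    (hB : Bornology.IsBounded (Set.range fun n : ℕ => traceMap^[n] p)) :
    ∃ B : Set (ℝ × ℝ × ℝ), IsOpen B ∧ p ∈ B ∧
      ∀ q ∈ B, frickeVogt q < 0 ∧
        Bornology.IsBounded (Set.range fun n : ℕ => traceMap^[n] q) := by
  have hneg : frickeVogt p < 0 := hI ▸ hV₀
  rcases frickeVogt_neg_trichotomy hneg with hin | hout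
  · exact ⟨innerRegion, isOpen_innerRegion, ⟨hneg, hin.1⟩,
      fun q hq => ⟨hq.1, isBounded_orbit_of_mem_innerRegion hq⟩⟩
  · exact absurd hB (not_isBounded_orbit_of_one_lt_sq hneg hout.2.2)
end

section
/- Characterization of escaping orbits: let p = (p_x, p_y, p_z) ∈ ℝ³ and let C ≥ 1 satisfy |p_z| ≤ C. Then the forward orbit {Tⁿ(p) : n ≥ 0} is unbounded if and only if there exists N ∈ ℕ such that, writing Tᴺ(p) = (x, y, z), one has |z| ≤ C, |x| > C and |y| > C. -/
open Set Bornology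

noncomputable def fricke (q : ℝ × ℝ × ℝ) : ℝ :=
  q.1 ^ 2 + q.2.1 ^ 2 + q.2.2 ^ 2 - 2 * q.1 * q.2.1 * q.2.2

section TraceMap

variable {q : ℝ × ℝ × ℝ}

@[simp]
lemma traceMap_fst : (traceMap q).1 = 2 * q.1 * q.2.1 - q.2.2 := rfl

@[simp]
lemma traceMap_snd_fst : (traceMap q).2.1 = q.1 := rfl

@[simp]
lemma traceMap_snd_snd : (traceMap q).2.2 = q.2.1 := rfl

lemma fricke_traceMap (q : ℝ × ℝ × ℝ) : fricke (traceMap q) = fricke q := by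
  simp only [fricke, traceMap_fst, traceMap_snd_fst, traceMap_snd_snd]
  ring

lemma fricke_iterate_traceMap (q : ℝ × ℝ × ℝ) (n : ℕ) : fricke (traceMap^[n] q) = fricke q :=
  congrFun (Function.iterate_invariant (f := traceMap) (g := fricke) (funext fricke_traceMap) n) q

lemma two_mul_abs_mul_sub_abs_le_abs_traceMap_fst (q : ℝ × ℝ × ℝ) :
    2 * |q.1| * |q.2.1| - |q.2.2| ≤ |(traceMap q).1| := by
  have h := abs_sub_abs_le_abs_sub (2 * q.1 * q.2.1) q.2.2
  rw [abs_mul, abs_mul, abs_two] at h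
  simpa using h

lemma abs_snd_fst_le_of_fricke {C : ℝ} (hx : |q.1| ≤ C) (hz : |q.2.2| ≤ C) :
    |q.2.1| ≤ 2 * C ^ 2 + |fricke q| + 1 := by
  have hxz : |q.1| * |q.2.2| ≤ C ^ 2 := by
    rw [sq]; exact mul_le_mul hx hz (abs_nonneg _) ((abs_nonneg _).trans hx)
  have hcross : |2 * q.1 * q.2.1 * q.2.2| = 2 * (|q.1| * |q.2.2|) * |q.2.1| := by
    rw [abs_mul, abs_mul, abs_mul, abs_two]; ring
  have hF : q.2.1 ^ 2 - 2 * q.1 * q.2.1 * q.2.2 ≤ fricke q := by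
    unfold fricke; nlinarith [sq_nonneg q.1, sq_nonneg q.2.2]
  have hquad : |q.2.1| ^ 2 ≤ |fricke q| + 2 * C ^ 2 * |q.2.1| := by
    nlinarith [sq_abs q.2.1, le_abs_self (fricke q), le_abs_self (2 * q.1 * q.2.1 * q.2.2),
      mul_le_mul_of_nonneg_right hxz (abs_nonneg q.2.1)]
  nlinarith [abs_nonneg q.2.1, abs_nonneg (fricke q)]

end TraceMap

section Bounded

variable {p : ℝ × ℝ × ℝ} {C : ℝ}

lemma isBounded_orbit_of_abs_snd_fst_le {K : ℝ} (hz : |p.2.2| ≤ K)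
    (hy : ∀ n, |(traceMap^[n] p).2.1| ≤ K) :
    IsBounded (range fun n : ℕ => traceMap^[n] p) := by
  refine isBounded_iff_forall_norm_le.2 ⟨K, ?_⟩
  rintro _ ⟨n, rfl⟩
  have hx : |(traceMap^[n] p).1| ≤ K := by
    simpa [Function.iterate_succ_apply'] using hy (n + 1)
  have hz' : |(traceMap^[n] p).2.2| ≤ K := by
    cases n with
    | zero => exact hz
    | succ n => simpa [Function.iterate_succ_apply'] using hy n
  simp only [norm_prod_le_iff, Real.norm_eq_abs]
  exact ⟨hx, hy n, hz'⟩

variable (hz : |p.2.2| ≤ C)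
  (hno : ∀ n, |(traceMap^[n] p).2.2| ≤ C → C < |(traceMap^[n] p).1| → |(traceMap^[n] p).2.1| ≤ C)
include hz hno

lemma abs_snd_snd_le_or_abs_snd_fst_le (n : ℕ) :
    |(traceMap^[n] p).2.2| ≤ C ∨ |(traceMap^[n] p).2.1| ≤ C := by
  induction n with
  | zero => exact Or.inl hz
  | succ n ih =>
    rw [Function.iterate_succ_apply', traceMap_snd_snd, traceMap_snd_fst]
    by_contra! h
    have hzn := ih.resolve_right h.1.not_ge
    exact h.1.not_ge (hno n hzn h.2)

lemma abs_snd_fst_iterate_le (n : ℕ) :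
    |(traceMap^[n] p).2.1| ≤ 2 * C ^ 2 + |fricke p| + 1 := by
  by_cases hy : |(traceMap^[n] p).2.1| ≤ C
  · nlinarith [abs_nonneg (fricke p)]
  have hzn := (abs_snd_snd_le_or_abs_snd_fst_le hz hno n).resolve_right hy
  have hxn : |(traceMap^[n] p).1| ≤ C := by
    by_contra! hx
    exact hy (hno n hzn hx)
  simpa [fricke_iterate_traceMap] using abs_snd_fst_le_of_fricke hxn hzn

lemma isBounded_orbit_of_not_escape : IsBounded (range fun n : ℕ => traceMap^[n] p) :=
  isBounded_orbit_of_abs_snd_fst_le (by nlinarith [abs_nonneg (fricke p)])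
    (abs_snd_fst_iterate_le hz hno)

end Bounded

section Escape

def escapeCone (a : ℝ) : Set (ℝ × ℝ × ℝ) :=
  {q | a ≤ |q.2.1| ∧ |q.2.1| ≤ |q.1| ∧ |q.2.2| ≤ |q.1|}

variable {a : ℝ} {q : ℝ × ℝ × ℝ}

lemma mul_abs_fst_le_abs_traceMap_fst (hq : q ∈ escapeCone a) :
    (2 * a - 1) * |q.1| ≤ |(traceMap q).1| := by
  obtain ⟨hay, -, hzx⟩ := hq
  nlinarith [two_mul_abs_mul_sub_abs_le_abs_traceMap_fst q, abs_nonneg q.1]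

lemma mapsTo_traceMap_escapeCone (ha : 1 ≤ a) : MapsTo traceMap (escapeCone a) (escapeCone a) := by
  intro q hq
  have hgrow := mul_abs_fst_le_abs_traceMap_fst hq
  obtain ⟨hay, hyx, -⟩ := hq
  refine ⟨?_, ?_, ?_⟩ <;> simp only [traceMap_snd_fst, traceMap_snd_snd] <;>
    nlinarith [abs_nonneg q.1]

lemma pow_mul_abs_fst_le_abs_iterate_fst (ha : 1 ≤ a) (hq : q ∈ escapeCone a) (n : ℕ) :
    (2 * a - 1) ^ n * |q.1| ≤ |(traceMap^[n] q).1| := by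
  induction n with
  | zero => simp
  | succ n ih =>
    rw [Function.iterate_succ_apply', pow_succ', mul_assoc]
    calc (2 * a - 1) * ((2 * a - 1) ^ n * |q.1|)
        ≤ (2 * a - 1) * |(traceMap^[n] q).1| := by gcongr; linarith
      _ ≤ _ := mul_abs_fst_le_abs_traceMap_fst ((mapsTo_traceMap_escapeCone ha).iterate n hq)

lemma not_isBounded_orbit_of_mem_escapeCone (ha : 1 < a) (hq : q ∈ escapeCone a) :
    ¬ IsBounded (range fun n : ℕ => traceMap^[n] q) := by
  intro hb
  obtain ⟨R, hR⟩ := isBounded_iff_forall_norm_le.1 hb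
  obtain ⟨n, hn⟩ := pow_unbounded_of_one_lt R (by linarith : 1 < 2 * a - 1)
  have hxn : |(traceMap^[n] q).1| ≤ R :=
    (norm_fst_le _).trans (hR _ ⟨n, rfl⟩)
  have hq1 : 1 ≤ |q.1| := by linarith [hq.1, hq.2.1]
  nlinarith [pow_mul_abs_fst_le_abs_iterate_fst ha.le hq n, pow_pos (by linarith : 0 < 2 * a - 1) n]

lemma traceMap_mem_escapeCone {C : ℝ} (hC : 1 ≤ C) (hz : |q.2.2| ≤ C) (hx : C < |q.1|)
    (hy : C < |q.2.1|) : traceMap q ∈ escapeCone |q.1| := by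
  have h := two_mul_abs_mul_sub_abs_le_abs_traceMap_fst q
  refine ⟨?_, ?_, ?_⟩ <;> simp only [traceMap_snd_fst, traceMap_snd_snd] <;> nlinarith

end Escape

theorem escape_characterization
    (p : ℝ × ℝ × ℝ) (C : ℝ) (hC : 1 ≤ C) (hz : |p.2.2| ≤ C) :
    ¬ Bornology.IsBounded (Set.range fun n : ℕ => traceMap^[n] p) ↔
      ∃ N : ℕ, |(traceMap^[N] p).2.2| ≤ C ∧ C < |(traceMap^[N] p).1| ∧
        C < |(traceMap^[N] p).2.1| := by
  constructor
  · intro hunbdd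
    by_contra! hno
    exact hunbdd (isBounded_orbit_of_not_escape hz hno)
  · rintro ⟨N, hzN, hxN, hyN⟩ hbdd
    refine not_isBounded_orbit_of_mem_escapeCone (by linarith)
      (traceMap_mem_escapeCone hC hzN hxN hyN) (hbdd.subset ?_)
    rintro _ ⟨n, rfl⟩
    exact ⟨n + (N + 1), by simp only [Function.iterate_add_apply, Function.iterate_succ_apply']⟩
end
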